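/- Let f and κ : ℝ → EReal be k-convex with (cl f)(0) > 0, and suppose g = max(nat f, κ) (pointwise maximum) is finite at some point. Then speedp(g*) = inf {max(f(φ)/φ, κ(θ)/θ) : φ, θ ∈ ℝ, 0 < φ ≤ θ} (infimum in EReal). -/

import Mathlib

/-!
For `θ > 0`, `nat f (θ) / θ = inf_{0 < φ ≤ θ} f(φ)/φ`. The inequality `≤` holds for every
admissible minorant of `f`; equality is attained by `x ↦ inf_{s ≥ 1} s f(x/s)`, which is convex as
a partial minimisation of the jointly convex perspective `(x, s) ↦ s f(x/s)`.
On the other hand `g = +∞` on `(-∞, 0)` and `g 0 ≥ nat f (0) ≥ 0` since `f 0 ≥ (cl f)(0) > 0`, so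
`g*(a) > 0` iff `g θ < θ a` for some `θ > 0`, whence `speedp g* = inf_{θ > 0} g(θ)/θ`.
Expanding `g(θ)/θ = max (nat f(θ)/θ, κ(θ)/θ)` and distributing the maximum over the infimum gives
the formula.
-/

open Set Filter Topology

noncomputable section

/-- `f : ℝ → EReal` is convex iff its epigraph is a convex set. -/
def EConvex (f : ℝ → EReal) : Prop :=
  Convex ℝ {p : ℝ × ℝ | f p.1 ≤ (p.2 : EReal)}

/-- The Fenchel dual `f*(a) = sup_θ (θ·a − f(θ))`. -/
def Fd (f : ℝ → EReal) : ℝ → EReal :=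
  fun a => ⨆ θ : ℝ, ((θ * a : ℝ) : EReal) - f θ

/-- The sweep `f°`: strictly positive values are swept to `+∞`. -/
def sweep (f : ℝ → EReal) : ℝ → EReal :=
  fun a => if f a ≤ 0 then f a else ⊤

/-- `speedp f = inf {a | f a > 0}`, as an extended real. -/
def speedp (f : ℝ → EReal) : EReal :=
  sInf ((fun a : ℝ => (a : EReal)) '' {a : ℝ | 0 < f a})

/-- k-convex functions. -/
def KConvex (f : ℝ → EReal) : Prop :=
  EConvex f ∧ (∃ θ : ℝ, 0 < θ ∧ f θ < ⊤) ∧ (∀ θ : ℝ, θ < 0 → f θ = ⊤)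

/-- The closure `cl f`: the greatest lower semicontinuous function beneath `f`. -/
def ecl (f : ℝ → EReal) : ℝ → EReal :=
  fun x => ⨆ g : {g : ℝ → EReal // LowerSemicontinuous g ∧ ∀ y, g y ≤ f y}, g.1 x

/-- r-functions: increasing, convex, somewhere in `(−∞,0)`, left continuous,
and `+∞` whenever strictly positive. -/
def RFunction (r : ℝ → EReal) : Prop :=
  Monotone r ∧ EConvex r ∧ (∃ a : ℝ, ⊥ < r a ∧ r a < 0) ∧
    (∀ a : ℝ, ContinuousWithinAt r (Set.Iio a) a) ∧
    (∀ a : ℝ, 0 < r a → r a = ⊤)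

/-- The greatest lower semicontinuous convex function beneath `f` and `g`. -/
def cv (f g : ℝ → EReal) : ℝ → EReal :=
  fun x => ⨆ h : {h : ℝ → EReal //
    LowerSemicontinuous h ∧ EConvex h ∧ (∀ y, h y ≤ f y) ∧ (∀ y, h y ≤ g y)}, h.1 x

/-- `enat f`: the pointwise sup of convex minorants `g` of `f` with `g θ / θ`
antitone on `(0,∞)`. -/
def enat (f : ℝ → EReal) : ℝ → EReal :=
  fun x => ⨆ g : {g : ℝ → EReal // EConvex g ∧ (∀ y, g y ≤ f y) ∧
      AntitoneOn (fun θ : ℝ => g θ * ((θ⁻¹ : ℝ) : EReal)) (Set.Ioi 0)}, g.1 x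

/-- `varthetapp f = sup {θ | f θ = enat f θ}`. -/
def varthetapp (f : ℝ → EReal) : EReal :=
  sSup ((fun θ : ℝ => (θ : EReal)) '' {θ : ℝ | f θ = enat f θ})

/-- `flt f = ((f*)°)*`. -/
def flt (f : ℝ → EReal) : ℝ → EReal := Fd (sweep (Fd f))

/-- The set where `f` is finite. -/
def Phi (f : ℝ → EReal) : Set ℝ := {θ : ℝ | f θ < ⊤}

/-- `A⁺`: points in `A` or above a point of `A`. -/
def plusSet (A : Set ℝ) : Set ℝ := {x : ℝ | ∃ a ∈ A, a ≤ x}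

/-- The subdifferential of `f` at `φ`. -/
def esubdiff (f : ℝ → EReal) (φ : ℝ) : Set ℝ :=
  {a : ℝ | ∀ θ : ℝ, f φ + ((a * (θ - φ) : ℝ) : EReal) ≤ f θ}

open Classical in
/-- The convex indicator of a set: `0` on `C` and `+∞` off it. -/
def echi (C : Set ℝ) : ℝ → EReal := fun θ => if θ ∈ C then 0 else ⊤

namespace EReal

lemma mul_coe_mul_coe_inv (x : EReal) {c : ℝ} (hc : c ≠ 0) :
    x * (c : EReal) * ((c⁻¹ : ℝ) : EReal) = x := by
  rw [mul_assoc, ← coe_mul, mul_inv_cancel₀ hc, coe_one, mul_one]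

def mulPosOrderIso {c : ℝ} (hc : 0 < c) : EReal ≃o EReal where
  toFun x := x * c
  invFun x := x * ((c⁻¹ : ℝ) : EReal)
  left_inv x := mul_coe_mul_coe_inv x hc.ne'
  right_inv x := by simpa using mul_coe_mul_coe_inv x (inv_ne_zero hc.ne')
  map_rel_iff' {x y} := by
    refine ⟨fun h => ?_, fun h => mul_le_mul_of_nonneg_right h (EReal.coe_nonneg.2 hc.le)⟩
    have := mul_le_mul_of_nonneg_right h (EReal.coe_nonneg.2 (inv_nonneg.2 hc.le))
    simpa only [Equiv.coe_fn_mk, mul_coe_mul_coe_inv _ hc.ne'] using this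

@[simp]
lemma mulPosOrderIso_apply {c : ℝ} (hc : 0 < c) (x : EReal) : mulPosOrderIso hc x = x * c := rfl

lemma mul_coe_lt_coe_iff_lt_div {c : ℝ} (hc : 0 < c) {x : EReal} {a : ℝ} :
    x * (c : EReal) < (a : EReal) ↔ x < ((a / c : ℝ) : EReal) := by
  rw [div_eq_mul_inv, coe_mul]
  exact ((mulPosOrderIso hc).lt_symm_apply).symm

lemma sInf_coe_image_setOf_lt (L : EReal) :
    sInf ((fun a : ℝ => (a : EReal)) '' {a : ℝ | L < a}) = L := by
  refine le_antisymm (le_of_forall_lt_iff_le.1 fun z hz => sInf_le ⟨z, hz, rfl⟩) ?_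
  exact le_sInf fun _ ⟨_, ha, hz⟩ => hz ▸ ha.le

end EReal

namespace EConvex

variable {f : ℝ → EReal}

lemma map_add_le (hf : EConvex f) {x y t u a b : ℝ} (hx : f x ≤ t) (hy : f y ≤ u)
    (ha : 0 ≤ a) (hb : 0 ≤ b) (hab : a + b = 1) :
    f (a * x + b * y) ≤ ((a * t + b * u : ℝ) : EReal) := by
  simpa using hf (x := (x, t)) (y := (y, u)) hx hy ha hb hab

lemma of_lt (h : ∀ ⦃x y t u a b : ℝ⦄, f x < t → f y < u → 0 ≤ a → 0 ≤ b → a + b = 1 →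
      f (a * x + b * y) ≤ ((a * t + b * u : ℝ) : EReal)) :
    EConvex f := by
  rintro ⟨x, t⟩ (hx : f x ≤ t) ⟨y, u⟩ (hy : f y ≤ u) a b ha hb hab
  show f (a * x + b * y) ≤ ((a * t + b * u : ℝ) : EReal)
  refine EReal.le_of_forall_lt_iff_le.1 fun z hz => ?_
  set ε := z - (a * t + b * u)
  have hε : 0 < ε := sub_pos.2 (EReal.coe_lt_coe_iff.1 hz)
  have hlt : ∀ {v : ℝ}, ((v : ℝ) : EReal) < ((v + ε : ℝ) : EReal) := fun {v} =>
    EReal.coe_lt_coe_iff.2 (lt_add_of_pos_right v hε)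
  have := h (hx.trans_lt hlt) (hy.trans_lt hlt) ha hb hab
  convert this using 2
  linear_combination (-ε) * hab

end EConvex

def natHull (f : ℝ → EReal) (x : ℝ) : EReal :=
  ⨅ s : Ici (1 : ℝ), f (x / s) * (s : EReal)

section natHull

variable (f : ℝ → EReal)

lemma natHull_le (x : ℝ) : natHull f x ≤ f x :=
  (iInf_le _ ⟨1, mem_Ici.2 le_rfl⟩).trans_eq (by simp)

lemma natHull_mul_inv {θ : ℝ} (hθ : 0 < θ) :
    natHull f θ * ((θ⁻¹ : ℝ) : EReal) = ⨅ φ : Ioc 0 θ, f φ * ((φ⁻¹ : ℝ) : EReal) := by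
  have hterm : ∀ s : Ici (1 : ℝ), f (θ / s) * (s : EReal) * ((θ⁻¹ : ℝ) : EReal)
      = f (θ / s) * (((θ / s)⁻¹ : ℝ) : EReal) := fun s => by
    rw [mul_assoc, ← EReal.coe_mul, inv_div, div_eq_mul_inv (s : ℝ)]
  rw [← EReal.mulPosOrderIso_apply (inv_pos.2 hθ), natHull, OrderIso.map_iInf]
  simp only [EReal.mulPosOrderIso_apply, hterm]
  refine le_antisymm (le_iInf fun φ => ?_) (le_iInf fun s => ?_)
  · have hs : (1 : ℝ) ≤ θ / φ := (one_le_div φ.2.1).2 φ.2.2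
    refine iInf_le_of_le ⟨θ / φ, hs⟩ ?_
    simp [div_div_cancel₀ hθ.ne']
  · have hs : (0 : ℝ) < s := zero_lt_one.trans_le s.2
    exact iInf_le_of_le ⟨θ / s, div_pos hθ hs, div_le_self hθ.le s.2⟩ le_rfl

lemma antitoneOn_natHull_mul_inv :
    AntitoneOn (fun θ : ℝ => natHull f θ * ((θ⁻¹ : ℝ) : EReal)) (Ioi 0) := by
  intro θ hθ θ' hθ' hle
  simp only [natHull_mul_inv f hθ, natHull_mul_inv f hθ']
  exact le_iInf fun φ => iInf_le_of_le ⟨φ, φ.2.1, φ.2.2.trans hle⟩ le_rfl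

variable {f}

lemma natHull_zero_nonneg (h0 : 0 ≤ f 0) : 0 ≤ natHull f 0 :=
  le_iInf fun s => by
    simpa using mul_nonneg h0 (EReal.coe_nonneg.2 (zero_le_one.trans s.2))

lemma econvex_natHull (hf : EConvex f) : EConvex (natHull f) := by
  refine EConvex.of_lt fun x y t u a b hx hy ha hb hab => ?_
  obtain ⟨⟨s, hs⟩, hxs⟩ := iInf_lt_iff.1 hx
  obtain ⟨⟨r, hr⟩, hyr⟩ := iInf_lt_iff.1 hy
  have hs0 : 0 < s := zero_lt_one.trans_le hs
  have hr0 : 0 < r := zero_lt_one.trans_le hr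
  set w := a * s + b * r
  have hw : 1 ≤ w := by
    linarith [mul_le_mul_of_nonneg_left (mem_Ici.1 hs) ha,
      mul_le_mul_of_nonneg_left (mem_Ici.1 hr) hb]
  have hw0 : 0 < w := zero_lt_one.trans_le hw
  -- `(a x + b y) / w` is the convex combination of `x / s` and `y / r` with weights
  -- `a s / w` and `b r / w`.
  have key := hf.map_add_le ((EReal.mul_coe_lt_coe_iff_lt_div hs0).1 hxs).le
    ((EReal.mul_coe_lt_coe_iff_lt_div hr0).1 hyr).le (a := a * s / w) (b := b * r / w)
    (by positivity) (by positivity) ((add_div _ _ _).symm.trans (div_self hw0.ne'))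
  have hpt : a * s / w * (x / s) + b * r / w * (y / r) = (a * x + b * y) / w := by
    field_simp
  have hval : a * s / w * (t / s) + b * r / w * (u / r) = (a * t + b * u) / w := by
    field_simp
  rw [hpt, hval] at key
  calc natHull f (a * x + b * y) ≤ f ((a * x + b * y) / w) * (w : EReal) :=
        iInf_le (fun s : Ici (1 : ℝ) => f ((a * x + b * y) / s) * (s : EReal)) ⟨w, hw⟩
    _ ≤ (((a * t + b * u) / w : ℝ) : EReal) * (w : EReal) :=
        mul_le_mul_of_nonneg_right key (EReal.coe_nonneg.2 hw0.le)
    _ = ((a * t + b * u : ℝ) : EReal) := by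
        rw [← EReal.coe_mul, div_mul_cancel₀ _ hw0.ne']

end natHull

section enat

variable {f : ℝ → EReal}

lemma le_enat {h : ℝ → EReal} (hh : EConvex h) (hhf : ∀ y, h y ≤ f y)
    (hanti : AntitoneOn (fun θ : ℝ => h θ * ((θ⁻¹ : ℝ) : EReal)) (Ioi 0)) (x : ℝ) :
    h x ≤ enat f x :=
  le_iSup (fun k : {k : ℝ → EReal // EConvex k ∧ (∀ y, k y ≤ f y) ∧
      AntitoneOn (fun θ : ℝ => k θ * ((θ⁻¹ : ℝ) : EReal)) (Ioi 0)} => k.1 x) ⟨h, hh, hhf, hanti⟩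

lemma natHull_le_enat (hf : EConvex f) (x : ℝ) : natHull f x ≤ enat f x :=
  le_enat (econvex_natHull hf) (natHull_le f) (antitoneOn_natHull_mul_inv f) x

lemma enat_mul_inv (hf : EConvex f) {θ : ℝ} (hθ : 0 < θ) :
    enat f θ * ((θ⁻¹ : ℝ) : EReal) = ⨅ φ : Ioc 0 θ, f φ * ((φ⁻¹ : ℝ) : EReal) := by
  refine le_antisymm ?_ ?_
  · rw [← EReal.mulPosOrderIso_apply (inv_pos.2 hθ), enat, OrderIso.map_iSup]
    refine iSup_le fun h => le_iInf fun φ => ?_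
    exact (h.2.2.2 φ.2.1 hθ φ.2.2).trans
      (mul_le_mul_of_nonneg_right (h.2.2.1 φ) (EReal.coe_nonneg.2 (inv_nonneg.2 φ.2.1.le)))
  · rw [← natHull_mul_inv f hθ]
    exact mul_le_mul_of_nonneg_right (natHull_le_enat hf θ)
      (EReal.coe_nonneg.2 (inv_nonneg.2 hθ.le))

end enat

lemma ecl_le (f : ℝ → EReal) (x : ℝ) : ecl f x ≤ f x :=
  iSup_le fun h => h.2.2 x

lemma zero_lt_Fd_iff {g : ℝ → EReal} {a : ℝ} :
    0 < Fd g a ↔ ∃ θ : ℝ, g θ < ((θ * a : ℝ) : EReal) := by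
  simp only [Fd, lt_iSup_iff, EReal.sub_pos]

lemma speedp_Fd_eq_iInf {g : ℝ → EReal} (hneg : ∀ θ < 0, g θ = ⊤) (h0 : 0 ≤ g 0) :
    speedp (Fd g) = ⨅ θ : Ioi (0 : ℝ), g θ * ((θ⁻¹ : ℝ) : EReal) := by
  have hslope : ∀ {θ a : ℝ}, 0 < θ →
      (g θ * ((θ⁻¹ : ℝ) : EReal) < a ↔ g θ < ((θ * a : ℝ) : EReal)) := fun hθ => by
    rw [EReal.mul_coe_lt_coe_iff_lt_div (inv_pos.2 hθ), div_inv_eq_mul, mul_comm]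
  have hpos : ∀ a : ℝ, 0 < Fd g a ↔ ⨅ θ : Ioi (0 : ℝ), g θ * ((θ⁻¹ : ℝ) : EReal) < a := by
    intro a
    rw [zero_lt_Fd_iff, iInf_lt_iff]
    constructor
    · rintro ⟨θ, hθa⟩
      rcases lt_trichotomy θ 0 with hθ | rfl | hθ
      · simp [hneg θ hθ] at hθa
      · simp only [zero_mul, EReal.coe_zero] at hθa
        exact absurd h0 hθa.not_ge
      · exact ⟨⟨θ, hθ⟩, (hslope hθ).2 hθa⟩
    · rintro ⟨⟨θ, hθ⟩, hθa⟩
      exact ⟨θ, (hslope hθ).1 hθa⟩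
  simp only [speedp, hpos]
  exact EReal.sInf_coe_image_setOf_lt _

lemma sInf_exists_pos_le_eq_iInf {α : Type*} [CompleteLattice α] (F : ℝ → ℝ → α) :
    sInf {v : α | ∃ φ θ : ℝ, 0 < φ ∧ φ ≤ θ ∧ v = F φ θ} =
      ⨅ θ : Ioi (0 : ℝ), ⨅ φ : Ioc 0 θ.1, F φ θ := by
  refine le_antisymm (le_iInf fun θ => le_iInf fun φ => sInf_le ⟨φ, θ, φ.2.1, φ.2.2, rfl⟩)
    (le_sInf ?_)
  rintro _ ⟨φ, θ, hφ, hφθ, rfl⟩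
  exact iInf_le_of_le ⟨θ, hφ.trans_le hφθ⟩ (iInf_le_of_le ⟨φ, hφ, hφθ⟩ le_rfl)

theorem speedp_two_class_general (f κ : ℝ → EReal) (hf : KConvex f) (hκ : KConvex κ)
    (hcl : 0 < ecl f 0)
    (g : ℝ → EReal) (hg : g = fun θ => max (enat f θ) (κ θ)) :
    speedp (Fd g) =
      sInf {v : EReal | ∃ φ θ : ℝ, 0 < φ ∧ φ ≤ θ ∧
        v = max (f φ * ((φ⁻¹ : ℝ) : EReal)) (κ θ * ((θ⁻¹ : ℝ) : EReal))} := by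
  subst hg
  have hf0 : 0 ≤ f 0 := (hcl.trans_le (ecl_le f 0)).le
  have hg0 : 0 ≤ max (enat f 0) (κ 0) :=
    le_max_of_le_left ((natHull_zero_nonneg hf0).trans (natHull_le_enat hf.1 0))
  rw [speedp_Fd_eq_iInf (fun θ hθ => by simp [hκ.2.2 θ hθ]) hg0,
    sInf_exists_pos_le_eq_iInf]
  refine iInf_congr fun θ => ?_
  rw [← EReal.mulPosOrderIso_apply (inv_pos.2 θ.2), (EReal.mulPosOrderIso _).monotone.map_max]
  simp only [EReal.mulPosOrderIso_apply, enat_mul_inv hf.1 θ.2]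
  exact iInf_sup_eq _ _

/-- Two-class speed formula: for k-convex `f, κ` with `(cl f)(0) > 0` and
`g = max (nat f) κ` finite somewhere,
`speedp g* = inf {max (f(φ)/φ, κ(θ)/θ) : 0 < φ ≤ θ}`. -/
theorem speedp_two_class (f κ : ℝ → EReal) (hf : KConvex f) (hκ : KConvex κ)
    (hcl : 0 < ecl f 0)
    (g : ℝ → EReal) (hg : g = fun θ => max (enat f θ) (κ θ))
    (hfin : ∃ θ : ℝ, g θ < ⊤) :
    speedp (Fd g) =
      sInf {v : EReal | ∃ φ θ : ℝ, 0 < φ ∧ φ ≤ θ ∧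
        v = max (f φ * ((φ⁻¹ : ℝ) : EReal)) (κ θ * ((θ⁻¹ : ℝ) : EReal))} :=
  speedp_two_class_general f κ hf hκ hcl g hg
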